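/- arXiv:2511.14700 — 3 statements merged into one kernel-verified Lean document; each statement's English description precedes it below -/
import Mathlib

section
/- Let φ: ℝ → ℝ be convex and differentiable at 0 with φ'(0) < 0, and let C₀, C₁ > 0 be constants with C₀ > C₁. Define R*(g) = C₁·φ(-g) + C₀·φ(g). Then every minimizer g* of R* over ℝ (if it exists) satisfies g* > 0. -/
/-- If φ is convex, differentiable at 0 with negative derivative, and C₀ > C₁ > 0,
then every minimizer of R*(g) = C₁·φ(-g) + C₀·φ(g) is strictly positive. -/
theorem stmt0 (φ : ℝ → ℝ) (hconv : ConvexOn ℝ Set.univ φ)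
    (m : ℝ) (hd : HasDerivAt φ m 0) (hm : m < 0)
    (C0 C1 : ℝ) (hC0 : 0 < C0) (hC1 : 0 < C1) (hlt : C1 < C0)
    (R : ℝ → ℝ) (hR : ∀ g, R g = C1 * φ (-g) + C0 * φ g)
    (gs : ℝ) (hmin : ∀ g, R gs ≤ R g) :
    0 < gs := by
  -- derivative of g ↦ φ (-g) at 0
  have hneg : HasDerivAt (fun g : ℝ => φ (-g)) (-m) 0 := by
    have h0 : HasDerivAt (fun g : ℝ => -g) (-1 : ℝ) 0 := (hasDerivAt_id 0).neg
    have hd' : HasDerivAt φ m (-(0:ℝ)) := by simpa using hd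
    have := hd'.comp 0 h0
    simpa [Function.comp_def, mul_comm] using this
  have hRfun : R = fun g => C1 * φ (-g) + C0 * φ g := funext hR
  have hR' : HasDerivAt R (m * (C0 - C1)) 0 := by
    have : HasDerivAt (fun g => C1 * φ (-g) + C0 * φ g) (C1 * -m + C0 * m) 0 :=
      (hneg.const_mul C1).add (hd.const_mul C0)
    rw [hRfun]
    convert this using 1
    ring
  have hdneg : m * (C0 - C1) < 0 := mul_neg_of_neg_of_pos hm (by linarith)
  -- find ε > 0 with R ε < R 0
  have hslope := hasDerivAt_iff_tendsto_slope.mp hR'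
  have hslope' : Filter.Tendsto (slope R 0) (nhdsWithin 0 (Set.Ioi 0)) (nhds (m * (C0 - C1))) :=
    hslope.mono_left (nhdsWithin_mono 0 (fun x hx => ne_of_gt hx))
  have hev : ∀ᶠ x in nhdsWithin (0:ℝ) (Set.Ioi 0), slope R 0 x < 0 :=
    hslope'.eventually (Filter.Tendsto.eventually_lt_const hdneg Filter.tendsto_id |>.mono
      (fun x hx => hx)) |>.mono (fun x hx => hx)
  obtain ⟨ε, hsl, hε⟩ := (hev.and self_mem_nhdsWithin).exists
  have hεpos : (0:ℝ) < ε := hε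
  have hRε : R ε < R 0 := by
    have : (R ε - R 0) / ε < 0 := by
      rw [slope_def_field] at hsl
      simpa using hsl
    have := (div_neg_iff.mp this)
    rcases this with ⟨h1, h2⟩ | ⟨h1, h2⟩
    · linarith
    · linarith
  -- convexity of R
  have hφneg : ConvexOn ℝ Set.univ (fun g : ℝ => φ (-g)) := by
    have := hconv.comp_affineMap (-(AffineMap.id ℝ ℝ))
    simpa [Function.comp_def] using this
  have hRconv : ConvexOn ℝ Set.univ R := by
    rw [hRfun]
    exact (hφneg.smul hC1.le).add (hconv.smul hC0.le)
  -- conclude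
  by_contra hle
  push_neg at hle
  rcases eq_or_lt_of_le hle with heq | hlt0
  · have := hmin ε
    rw [← heq] at hRε
    linarith
  · set a : ℝ := ε / (ε - gs) with ha
    set b : ℝ := -gs / (ε - gs) with hb
    have hd0 : (0:ℝ) < ε - gs := by linarith
    have ha0 : 0 ≤ a := div_nonneg hεpos.le hd0.le
    have hb0 : 0 ≤ b := div_nonneg (by linarith) hd0.le
    have hab : a + b = 1 := by
      rw [ha, hb, ← add_div, ← sub_eq_add_neg, div_self hd0.ne']
    have hcomb : a • gs + b • ε = 0 := by
      simp only [smul_eq_mul, ha, hb]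
      field_simp
      ring
    have := hRconv.2 (Set.mem_univ gs) (Set.mem_univ ε) ha0 hb0 hab
    rw [hcomb] at this
    have h1 : R gs ≤ R ε := hmin ε
    have h0 : R gs ≤ R 0 := hmin 0
    have : R 0 ≤ a * R gs + b * R ε := by simpa [smul_eq_mul] using this
    have h2 : a * R gs ≤ a * R ε := mul_le_mul_of_nonneg_left h1 ha0
    have h3 : a * R ε + b * R ε = R ε := by rw [← add_mul, hab, one_mul]
    linarith
end

section
/- Let φ: ℝ → ℝ be convex and differentiable at 0 with φ'(0) < 0, and let C₀, C₁ > 0 with C₁ > C₀. Define R*(g) = C₁·φ(-g) + C₀·φ(g). Then every minimizer g* of R* over ℝ (if it exists) satisfies g* < 0. -/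
/-- If φ is convex, differentiable at 0 with negative derivative, and C₁ > C₀ > 0,
then every minimizer of R*(g) = C₁·φ(-g) + C₀·φ(g) is strictly negative. -/
theorem stmt1 (φ : ℝ → ℝ) (hconv : ConvexOn ℝ Set.univ φ)
    (m : ℝ) (hd : HasDerivAt φ m 0) (hm : m < 0)
    (C0 C1 : ℝ) (hC0 : 0 < C0) (hC1 : 0 < C1) (hlt : C0 < C1)
    (R : ℝ → ℝ) (hR : ∀ g, R g = C1 * φ (-g) + C0 * φ g)
    (gs : ℝ) (hmin : ∀ g, R gs ≤ R g) :
    gs < 0 := by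
  -- R has derivative m*(C0 - C1) > 0 at 0
  have hRfun : R = fun g => C1 * φ (-g) + C0 * φ g := funext hR
  have hdneg : HasDerivAt (fun g : ℝ => φ (-g)) (-m) 0 := by
    have h1 : HasDerivAt (fun g : ℝ => -g) (-1) 0 := (hasDerivAt_id 0).neg
    have hd' : HasDerivAt φ m ((fun g : ℝ => -g) 0) := by simpa using hd
    simpa [Function.comp_def] using (hd'.comp 0 h1 : HasDerivAt (fun g : ℝ => φ (-g)) (m * (-1)) 0)
  have hdR : HasDerivAt R (m * (C0 - C1)) 0 := by
    rw [hRfun]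
    have : HasDerivAt (fun g => C1 * φ (-g) + C0 * φ g) (C1 * -m + C0 * m) 0 := ((hdneg.const_mul C1).add (hd.const_mul C0))
    convert this using 1
    ring
  have hDpos : 0 < m * (C0 - C1) := by nlinarith
  -- find t < 0 with R t < R 0
  have hslope : Filter.Tendsto (slope R 0) (nhdsWithin 0 {(0:ℝ)}ᶜ) (nhds (m * (C0 - C1))) :=
    hasDerivAt_iff_tendsto_slope.mp hdR
  have hslope' : Filter.Tendsto (slope R 0) (nhdsWithin 0 (Set.Iio 0)) (nhds (m * (C0 - C1))) :=
    hslope.mono_left (nhdsWithin_mono 0 (fun x hx => ne_of_lt hx))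
  have hev : ∀ᶠ t in nhdsWithin 0 (Set.Iio 0), 0 < slope R 0 t :=
    hslope'.eventually (eventually_gt_nhds hDpos)
  have hne : (nhdsWithin (0:ℝ) (Set.Iio 0)).NeBot := by infer_instance
  obtain ⟨t, ht⟩ := (hev.and self_mem_nhdsWithin).exists
  have htneg : t < 0 := ht.2
  have hslope_t : 0 < (R t - R 0) / (t - 0) := by simpa [slope_def_field, div_eq_inv_mul] using ht.1
  have hRt : R t < R 0 := by
    rcases lt_or_ge (R t) (R 0) with h | h
    · exact h
    · exfalso
      have : (R t - R 0) / (t - 0) ≤ 0 := div_nonpos_of_nonneg_of_nonpos (by linarith) (by linarith)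
      linarith
  -- now suppose gs ≥ 0
  by_contra hge
  push_neg at hge
  rcases eq_or_lt_of_le hge with heq | hgs
  · have := hmin t
    rw [← heq] at this
    linarith
  · -- 0 is a convex combination of t and gs
    have ha : 0 < gs - t := by linarith
    have hane : gs - t ≠ 0 := ne_of_gt ha
    have hapos : 0 ≤ gs / (gs - t) := le_of_lt (div_pos hgs ha)
    have hbpos : 0 ≤ -t / (gs - t) := le_of_lt (div_pos (by linarith) ha)
    set a : ℝ := gs / (gs - t) with hadef
    set b : ℝ := -t / (gs - t) with hbdef
    have hab : a + b = 1 := by rw [hadef, hbdef]; field_simp; ring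
    have hcomb : a * t + b * gs = 0 := by rw [hadef, hbdef]; field_simp; ring
    -- convexity of R
    have hconvneg : ConvexOn ℝ Set.univ (fun g : ℝ => φ (-g)) := by
      refine ⟨convex_univ, fun x _ y _ p q hp hq hpq => ?_⟩
      have h := hconv.2 (Set.mem_univ (-x)) (Set.mem_univ (-y)) hp hq hpq
      simp only [smul_eq_mul] at h ⊢
      have heq : -(p * x + q * y) = p * (-x) + q * (-y) := by ring
      rw [heq]; exact h
    have hconvR : ConvexOn ℝ Set.univ R := by
      rw [hRfun]
      exact (hconvneg.smul hC1.le).add (hconv.smul hC0.le)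
    have hRle := hconvR.2 (Set.mem_univ t) (Set.mem_univ gs) hapos hbpos hab
    rw [smul_eq_mul, smul_eq_mul, hcomb] at hRle
    have hRgs : R gs < R 0 := lt_of_le_of_lt (hmin t) hRt
    have : R 0 < R 0 := by
      calc R 0 ≤ a * R t + b * R gs := hRle
        _ < a * R 0 + b * R 0 := by
            rcases eq_or_lt_of_le hapos with ha0 | ha0
            · rcases eq_or_lt_of_le hbpos with hb0 | hb0
              · exfalso; rw [← ha0, ← hb0] at hab; norm_num at hab
              · nlinarith
            · nlinarith
        _ = R 0 := by rw [← add_mul, hab, one_mul]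
    exact lt_irrefl _ this
end

section
/- Let φ: ℝ → ℝ be convex and differentiable at 0, and let C₀, C₁ > 0. Define R*(g) = C₁·φ(-g) + C₀·φ(g) and suppose (dR*/dg)(0) < 0. If there exists ǧ > 0 with R*(ǧ) ≤ R*(0) + (ǧ/2)·(dR*/dg)(0), then every g with 0 ≤ g ≤ ǧ/4 satisfies R*(g) > R*(ǧ). In particular any minimizer of R* exceeds ǧ/4. -/
/-- If R*(g) = C₁·φ(-g) + C₀·φ(g) with φ convex and differentiable at 0, the derivative of R*
at 0 is negative, and ǧ > 0 satisfies R*(ǧ) ≤ R*(0) + (ǧ/2)·R*'(0), then every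
g with 0 ≤ g ≤ ǧ/4 satisfies R*(g) > R*(ǧ); in particular minimizers exceed ǧ/4. -/
theorem stmt2 (φ : ℝ → ℝ) (hconv : ConvexOn ℝ Set.univ φ)
    (mφ : ℝ) (hdφ : HasDerivAt φ mφ 0)
    (C0 C1 : ℝ) (hC0 : 0 < C0) (hC1 : 0 < C1)
    (R : ℝ → ℝ) (hR : ∀ g, R g = C1 * φ (-g) + C0 * φ g)
    (m : ℝ) (hd : HasDerivAt R m 0) (hm : m < 0)
    (gc : ℝ) (hgc : 0 < gc) (hgcR : R gc ≤ R 0 + (gc / 2) * m) :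
    (∀ g, 0 ≤ g → g ≤ gc / 4 → R gc < R g) ∧
    (∀ gm, (∀ g, R gm ≤ R g) → gc / 4 < gm) := by
  -- R is convex
  have hneg : ConvexOn ℝ Set.univ (fun g : ℝ => φ (-g)) := by
    have := hconv.comp_affineMap (-(AffineMap.id ℝ ℝ))
    simpa [Function.comp_def] using this
  have hRconv : ConvexOn ℝ Set.univ R := by
    have h1 : ConvexOn ℝ Set.univ (fun g : ℝ => C1 * φ (-g) + C0 * φ g) :=
      (hneg.smul hC1.le).add (hconv.smul hC0.le)
    have hfun : R = fun g : ℝ => C1 * φ (-g) + C0 * φ g := funext hR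
    rwa [hfun]
  -- supporting line: ∀ g, R 0 + g * m ≤ R g
  have key : ∀ g : ℝ, R 0 + g * m ≤ R g := by
    intro g
    rcases lt_trichotomy g 0 with hg | hg | hg
    · have := hRconv.slope_le_of_hasDerivAt (Set.mem_univ g) (Set.mem_univ 0) hg
        hd
      rw [slope_def_field] at this
      have hne : (0 : ℝ) - g > 0 := by linarith
      rw [div_le_iff₀ hne] at this
      nlinarith
    · simp [hg]
    · have := hRconv.le_slope_of_hasDerivAt (Set.mem_univ 0) (Set.mem_univ g) hg
        hd
      rw [slope_def_field] at this
      have hne : g - 0 > 0 := by linarith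
      rw [le_div_iff₀ hne] at this
      nlinarith
  have main : ∀ g, 0 ≤ g → g ≤ gc / 4 → R gc < R g := by
    intro g hg0 hg4
    have h1 := key g
    have h2 : gc / 2 * m < g * m := by nlinarith
    linarith
  refine ⟨main, fun gm hgm => ?_⟩
  by_contra h
  push_neg at h
  rcases le_or_gt 0 gm with h0 | h0
  · exact absurd (hgm gc) (not_le.mpr (main gm h0 h))
  · have h1 := key gm
    have h2 : 0 < gm * m := mul_pos_of_neg_of_neg h0 hm
    have h3 : R gc < R gm := by nlinarith
    exact absurd (hgm gc) (not_le.mpr h3)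
end
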